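/- arXiv:1007.1553 — 5 statements merged into one kernel-verified Lean document; each statement's English description precedes it below -/
import Mathlib

section
/- If the edge set of the complete graph K_n (n ≥ 2) is partitioned into the edge sets of m pairwise edge-disjoint complete bipartite subgraphs, then m ≥ n - 1. -/
/-!
Take z : V → ℚ with ∑ z = 0 and ∑_{L i} z = 0 for every block i; if |V| > m + 1 such a nonzero z
exists, as these are only m + 1 linear conditions. Since the blocks partition the edges,
  0 = (∑ z)² = ∑ z_u² + 2 ∑_i (∑_{L i} z)(∑_{R i} z) = ∑ z_u²,
forcing z = 0.
-/

open Finset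

theorem exists_ne_zero_forall_sum_eq_zero {K κ V : Type*} [Field K] [Fintype κ] [Fintype V]
    (S : κ → Finset V) (h : Fintype.card κ < Fintype.card V) :
    ∃ z : V → K, z ≠ 0 ∧ ∀ k, ∑ u ∈ S k, z u = 0 := by
  let f : (V → K) →ₗ[K] κ → K := LinearMap.pi fun k => ∑ u ∈ S k, LinearMap.proj u
  obtain ⟨z, hz, hz0⟩ := Submodule.exists_mem_ne_zero_of_ne_bot
    (LinearMap.ker_ne_bot_of_finrank_lt (f := f) (by simpa using h))
  refine ⟨z, hz0, fun k => ?_⟩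
  simpa [f] using congrFun (LinearMap.mem_ker.1 hz) k

section

variable {V : Type*} [DecidableEq V]

theorem sq_sum_eq_sum_sq_add_sum_offDiag {R : Type*} [CommSemiring R] (s : Finset V)
    (z : V → R) :
    (∑ u ∈ s, z u) ^ 2 = ∑ u ∈ s, z u ^ 2 + ∑ p ∈ s.offDiag, z p.1 * z p.2 := by
  rw [sq, sum_mul_sum, ← sum_product', ← diag_union_offDiag,
    sum_union (disjoint_diag_offDiag s), sum_diag]
  simp only [sq]

/-- Each edge between `s` and `t` appears twice, as both of its orientations. -/
def bicliqueEdges (s t : Finset V) : Finset (V × V) := s ×ˢ t ∪ t ×ˢ s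

theorem mem_bicliqueEdges {s t : Finset V} {p : V × V} :
    p ∈ bicliqueEdges s t ↔ (p.1 ∈ s ∧ p.2 ∈ t) ∨ (p.2 ∈ s ∧ p.1 ∈ t) := by
  simp only [bicliqueEdges, mem_union, mem_product, and_comm (a := p.2 ∈ s)]

theorem ne_of_mem_bicliqueEdges {s t : Finset V} (hst : Disjoint s t) {p : V × V}
    (hp : p ∈ bicliqueEdges s t) : p.1 ≠ p.2 := by
  intro hp12
  rcases mem_bicliqueEdges.1 hp with ⟨h1, h2⟩ | ⟨h1, h2⟩
  · exact disjoint_left.1 hst h1 (hp12 ▸ h2)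
  · exact disjoint_left.1 hst (hp12 ▸ h1) h2

theorem sum_bicliqueEdges_mul {R : Type*} [CommSemiring R] {s t : Finset V} (hst : Disjoint s t)
    (z : V → R) :
    ∑ p ∈ bicliqueEdges s t, z p.1 * z p.2 = 2 * ((∑ u ∈ s, z u) * ∑ v ∈ t, z v) := by
  have hdisj : Disjoint (s ×ˢ t) (t ×ˢ s) := disjoint_product.2 (Or.inl hst)
  rw [bicliqueEdges, sum_union hdisj, sum_product, sum_product, ← sum_mul_sum, ← sum_mul_sum]
  ring

end

structure IsBicliquePartition {ι V : Type*} (L R : ι → Finset V) : Prop where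
  disjoint : ∀ i, Disjoint (L i) (R i)
  existsUnique : ∀ u v, u ≠ v → ∃! i, (u ∈ L i ∧ v ∈ R i) ∨ (v ∈ L i ∧ u ∈ R i)

namespace IsBicliquePartition

variable {ι V : Type*} [DecidableEq V] {L R : ι → Finset V}

theorem offDiag_eq_biUnion [Fintype ι] [Fintype V] (hP : IsBicliquePartition L R) :
    (univ : Finset V).offDiag = univ.biUnion fun i => bicliqueEdges (L i) (R i) := by
  ext ⟨u, v⟩
  simp only [mem_offDiag, mem_univ, true_and, mem_biUnion]
  constructor
  · intro huv
    obtain ⟨i, hi, -⟩ := hP.existsUnique u v huv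
    exact ⟨i, mem_bicliqueEdges.2 hi⟩
  · rintro ⟨i, hi⟩
    exact ne_of_mem_bicliqueEdges (hP.disjoint i) hi

theorem pairwiseDisjoint_bicliqueEdges (hP : IsBicliquePartition L R) :
    (Set.univ : Set ι).PairwiseDisjoint fun i => bicliqueEdges (L i) (R i) := by
  intro i _ j _ hij
  refine disjoint_left.2 fun p hpi hpj => hij ?_
  obtain ⟨k, -, huniq⟩ := hP.existsUnique p.1 p.2 (ne_of_mem_bicliqueEdges (hP.disjoint i) hpi)
  exact (huniq i (mem_bicliqueEdges.1 hpi)).trans (huniq j (mem_bicliqueEdges.1 hpj)).symm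

theorem sum_offDiag_mul [Fintype ι] [Fintype V] {K : Type*} [CommSemiring K]
    (hP : IsBicliquePartition L R) (z : V → K) :
    ∑ p ∈ (univ : Finset V).offDiag, z p.1 * z p.2 =
      ∑ i, 2 * ((∑ u ∈ L i, z u) * ∑ v ∈ R i, z v) := by
  rw [hP.offDiag_eq_biUnion, sum_biUnion (coe_univ (α := ι) ▸ hP.pairwiseDisjoint_bicliqueEdges)]
  exact sum_congr rfl fun i _ => sum_bicliqueEdges_mul (hP.disjoint i) z

theorem eq_zero_of_sum_eq_zero [Fintype ι] [Fintype V] {K : Type*} [CommRing K] [LinearOrder K]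
    [IsStrictOrderedRing K] (hP : IsBicliquePartition L R) {z : V → K}
    (hsum : ∑ u, z u = 0) (hL : ∀ i, ∑ u ∈ L i, z u = 0) : z = 0 := by
  have hsq : ∑ u, z u * z u = 0 := by
    have h := sq_sum_eq_sum_sq_add_sum_offDiag univ z
    simp only [hsum, hP.sum_offDiag_mul, hL, zero_mul, mul_zero, sum_const_zero, add_zero] at h
    simpa only [sq, mul_zero] using h.symm
  funext u
  exact (sum_mul_self_eq_zero_iff univ z).1 hsq u (mem_univ u)

theorem card_le [Fintype ι] [Fintype V] (hP : IsBicliquePartition L R) :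
    Fintype.card V ≤ Fintype.card ι + 1 := by
  by_contra! hcard
  obtain ⟨z, hz0, hz⟩ := exists_ne_zero_forall_sum_eq_zero (K := ℚ)
    (fun k : Option ι => k.elim univ L) (by simpa using hcard)
  exact hz0 (hP.eq_zero_of_sum_eq_zero (hz none) fun i => hz (some i))

end IsBicliquePartition

theorem graham_pollak_general (n m : ℕ)
    (L R : Fin m → Finset (Fin n))
    (hdisj : ∀ i, Disjoint (L i) (R i))
    (hpart : ∀ u v : Fin n, u ≠ v →
      ∃! i : Fin m, (u ∈ L i ∧ v ∈ R i) ∨ (v ∈ L i ∧ u ∈ R i)) :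
    n - 1 ≤ m := by
  have h := (IsBicliquePartition.mk hdisj hpart).card_le
  simp only [Fintype.card_fin] at h
  omega

/-- Graham–Pollak: if the edges of `K_n` (`n ≥ 2`) are partitioned into the edge
sets of `m` complete bipartite subgraphs `(L i, R i)`, then `m ≥ n - 1`. -/
theorem graham_pollak (n m : ℕ) (hn : 2 ≤ n)
    (L R : Fin m → Finset (Fin n))
    (hdisj : ∀ i, Disjoint (L i) (R i))
    (hL : ∀ i, (L i).Nonempty) (hR : ∀ i, (R i).Nonempty)
    (hpart : ∀ u v : Fin n, u ≠ v →
      ∃! i : Fin m, (u ∈ L i ∧ v ∈ R i) ∨ (v ∈ L i ∧ u ∈ R i)) :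
    n - 1 ≤ m :=
  graham_pollak_general n m L R hdisj hpart
end

section
/- Suppose the edges of K_n are partitioned by complete bipartite graphs (A_j, B_j), j = 1,...,k. Let τ : [n] → ℤ satisfy Σ_{p∈A_j} τ(p) = 0 for all j and Σ_{p∈[n]} τ(p) = 0. Then Σ_{i<j} τ(i)τ(j) = 0 and hence Σ_i τ(i)² = 0, so τ = 0. -/
/-- If the edges of `K_n` are partitioned by complete bipartite graphs `(A j, B j)`
and `τ` sums to zero on each `A j` and on all of `[n]`, then
`Σ_{i<j} τᵢτⱼ = 0`, `Σ τᵢ² = 0`, and `τ = 0`. -/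
theorem tau_vanishes_of_partition (n k : ℕ)
    (A B : Fin k → Finset (Fin n))
    (hdisj : ∀ j, Disjoint (A j) (B j))
    (hpart : ∀ u v : Fin n, u ≠ v →
      ∃! j : Fin k, (u ∈ A j ∧ v ∈ B j) ∨ (v ∈ A j ∧ u ∈ B j))
    (τ : Fin n → ℤ)
    (hA : ∀ j, ∑ p ∈ A j, τ p = 0)
    (htot : ∑ p, τ p = 0) :
    (∑ i, ∑ j ∈ Finset.univ.filter (fun j => i < j), τ i * τ j) = 0 ∧
      (∑ i, (τ i) ^ 2) = 0 ∧ τ = 0 := by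
  classical
  -- Step 1: the key identity
  have key : (∑ i, ∑ j ∈ Finset.univ.filter (fun j => i < j), τ i * τ j) = 0 := by
    have h1 : (∑ i, ∑ j ∈ Finset.univ.filter (fun j => i < j), τ i * τ j)
        = ∑ p ∈ (Finset.univ ×ˢ Finset.univ).filter
            (fun p : Fin n × Fin n => p.1 < p.2), τ p.1 * τ p.2 := by
      rw [Finset.sum_filter, Finset.sum_product]
      simp [Finset.sum_filter]
    have h2 : (∑ j : Fin k, (∑ p ∈ A j, τ p) * (∑ q ∈ B j, τ q)) = 0 := by
      simp [hA]
    have h3 : (∑ j : Fin k, (∑ p ∈ A j, τ p) * (∑ q ∈ B j, τ q))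
        = ∑ x ∈ Finset.univ.sigma (fun j => A j ×ˢ B j), τ x.2.1 * τ x.2.2 := by
      rw [Finset.sum_sigma]
      exact Finset.sum_congr rfl fun j _ => by
        rw [Finset.sum_product, Finset.sum_mul]
        exact Finset.sum_congr rfl fun u _ => by rw [Finset.mul_sum]
    have h4 : (∑ x ∈ Finset.univ.sigma (fun j => A j ×ˢ B j), τ x.2.1 * τ x.2.2)
        = ∑ p ∈ (Finset.univ ×ˢ Finset.univ).filter
            (fun p : Fin n × Fin n => p.1 < p.2), τ p.1 * τ p.2 := by
      refine Finset.sum_bij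
        (fun x _ => if x.2.1 < x.2.2 then x.2 else x.2.swap) ?_ ?_ ?_ ?_
      · rintro ⟨j, u, v⟩ hx
        simp only [Finset.mem_sigma, Finset.mem_product] at hx
        have hne : u ≠ v := fun h => (Finset.disjoint_left.mp (hdisj j)) hx.2.1 (h ▸ hx.2.2)
        rcases lt_or_gt_of_ne hne with h | h
        · simp [h]
        · simp [not_lt.mpr h.le, h, Prod.swap]
      · rintro ⟨j, u, v⟩ hx ⟨j', u', v'⟩ hx' heq
        simp only [Finset.mem_sigma, Finset.mem_product] at hx hx'
        have hne : u ≠ v := fun h => (Finset.disjoint_left.mp (hdisj j)) hx.2.1 (h ▸ hx.2.2)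
        have hne' : u' ≠ v' := fun h => (Finset.disjoint_left.mp (hdisj j')) hx'.2.1 (h ▸ hx'.2.2)
        -- the two underlying unordered pairs coincide
        have hcase : (u', v') = (u, v) ∨ (u', v') = (v, u) := by
          by_cases h1 : u < v <;> by_cases h2 : u' < v' <;>
            simp only [h1, h2, if_true, if_false, Prod.swap] at heq <;>
            [left; right; right; left] <;>
            · rw [Prod.ext_iff] at heq ⊢; tauto
        rcases hcase with h | h
        · obtain ⟨rfl, rfl⟩ := Prod.mk.injEq .. ▸ (Prod.ext_iff.mp h)
          have hj := hpart u v hne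
          obtain ⟨j₀, _, huniq⟩ := hj
          have e1 : j = j₀ := huniq j (Or.inl ⟨hx.2.1, hx.2.2⟩)
          have e2 : j' = j₀ := huniq j' (Or.inl ⟨hx'.2.1, hx'.2.2⟩)
          subst e1; rw [e2]
        · obtain ⟨rfl, rfl⟩ := Prod.mk.injEq .. ▸ (Prod.ext_iff.mp h)
          -- u' = v, v' = u ; both (u ∈ A j, v ∈ B j) and (v ∈ A j', u ∈ B j')
          obtain ⟨j₀, _, huniq⟩ := hpart u v hne
          have e1 : j = j₀ := huniq j (Or.inl ⟨hx.2.1, hx.2.2⟩)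
          have e2 : j' = j₀ := huniq j' (Or.inr ⟨hx'.2.1, hx'.2.2⟩)
          subst e1; subst e2
          exact absurd hx'.2.1 (Finset.disjoint_right.mp (hdisj _) hx.2.2)
      · rintro ⟨u, v⟩ hb
        simp only [Finset.mem_filter, Finset.mem_product] at hb
        have hne : u ≠ v := ne_of_lt hb.2
        obtain ⟨j, hj, -⟩ := hpart u v hne
        rcases hj with ⟨hu, hv⟩ | ⟨hv, hu⟩
        · refine ⟨⟨j, u, v⟩, ?_, ?_⟩
          · simp [Finset.mem_sigma, Finset.mem_product, hu, hv]
          · simp [hb.2]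
        · refine ⟨⟨j, v, u⟩, ?_, ?_⟩
          · simp [Finset.mem_sigma, Finset.mem_product, hu, hv]
          · simp [not_lt.mpr hb.2.le, Prod.swap]
      · rintro ⟨j, u, v⟩ hx
        by_cases h : u < v
        · simp [h]
        · simp [h, Prod.swap, mul_comm]
    rw [h1, ← h4, ← h3, h2]
  have hsq : (∑ p, τ p) * (∑ p, τ p)
        = (∑ i, (τ i) ^ 2) + 2 * ∑ i, ∑ j ∈ Finset.univ.filter (fun j => i < j), τ i * τ j := by
      rw [Finset.sum_mul_sum]
      have : ∀ i : Fin n, ∑ j, τ i * τ j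
          = (∑ j ∈ Finset.univ.filter (fun j => i < j), τ i * τ j)
            + (τ i ^ 2 + ∑ j ∈ Finset.univ.filter (fun j => j < i), τ i * τ j) := by
        intro i
        rw [← Finset.sum_filter_add_sum_filter_not Finset.univ (fun j => i < j)]
        congr 1
        have : Finset.univ.filter (fun j => ¬ i < j)
            = insert i (Finset.univ.filter (fun j => j < i)) := by
          ext j; simp [not_lt, le_iff_lt_or_eq, or_comm, eq_comm]
        rw [this, Finset.sum_insert (by simp), sq]
      rw [Finset.sum_congr rfl fun i _ => this i, Finset.sum_add_distrib,
        Finset.sum_add_distrib]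
      have hswap : (∑ i, ∑ j ∈ Finset.univ.filter (fun j => j < i), τ i * τ j)
          = ∑ i, ∑ j ∈ Finset.univ.filter (fun j => i < j), τ i * τ j := by
        rw [Finset.sum_comm' (s' := fun j => Finset.univ.filter (fun i => j < i))
          (t' := Finset.univ) (by intro i j; simp)]
        exact Finset.sum_congr rfl fun j _ => Finset.sum_congr rfl fun i _ => mul_comm _ _
      rw [hswap]; ring
  have h0 : (∑ i, (τ i) ^ 2) = 0 := by
    have := hsq
    rw [htot, key] at this
    linarith
  refine ⟨key, h0, ?_⟩
  funext i
  have := (Finset.sum_eq_zero_iff_of_nonneg (fun i _ => sq_nonneg (τ i))).mp h0 i (Finset.mem_univ i)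
  exact pow_eq_zero_iff (by norm_num) |>.mp this
end

section
/- Suppose the edges of K_n are partitioned by complete bipartite graphs (A_j, B_j), j=1,...,k, and let V₁,...,Vₙ and V₁',...,Vₙ' be positive integers (part sizes) with Σ_{p∈A_j} |V_p| = Σ_{p∈A_j} |V_p'| for every j and Σ_p |V_p| = Σ_p |V_p'|. Then the graphs H (disjoint union of the two complete multipartite graphs with parts V_i, resp. V_i') and H' (bipartite graph with edges between V_i and V_j' for i ≠ j) have the same number of edges, and consequently |V_p| = |V_p'| for every p. -/
open Finset

/-- Given an edge partition of `K_n` by complete bipartite graphs `(A j, B j)` and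
positive part sizes `V`, `V'` with equal sums over each `A j` and equal totals,
the graphs `H` and `H'` have equally many edges, and hence `V p = V' p` for all `p`. -/
theorem equal_patterns_force_equal_parts (n k : ℕ)
    (A B : Fin k → Finset (Fin n))
    (hdisj : ∀ j, Disjoint (A j) (B j))
    (hpart : ∀ u v : Fin n, u ≠ v →
      ∃! j : Fin k, (u ∈ A j ∧ v ∈ B j) ∨ (v ∈ A j ∧ u ∈ B j))
    (V V' : Fin n → ℕ) (hV : ∀ p, 0 < V p) (hV' : ∀ p, 0 < V' p)
    (hAj : ∀ j, ∑ p ∈ A j, V p = ∑ p ∈ A j, V' p)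
    (htot : ∑ p, V p = ∑ p, V' p) :
    ((∑ i, ∑ j ∈ Finset.univ.filter (fun j => i < j), V i * V j) +
     (∑ i, ∑ j ∈ Finset.univ.filter (fun j => i < j), V' i * V' j) =
     ∑ i, ∑ j ∈ Finset.univ.filter (fun j => j ≠ i), V i * V' j) ∧
      ∀ p, V p = V' p := by
  classical
  -- Key lemma: break any off-diagonal double sum along the bipartite pieces.
  have key : ∀ f g : Fin n → ℕ,
      (∑ u, ∑ v ∈ Finset.univ.filter (fun v => v ≠ u), f u * g v)
      = ∑ j, ((∑ p ∈ A j, f p) * (∑ q ∈ B j, g q)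
            + (∑ p ∈ B j, f p) * (∑ q ∈ A j, g q)) := by
    intro f g
    have step : ∀ u v : Fin n,
        (if v ≠ u then f u * g v else 0)
        = ∑ j, if (u ∈ A j ∧ v ∈ B j) ∨ (v ∈ A j ∧ u ∈ B j) then f u * g v else 0 := by
      intro u v
      by_cases huv : v ≠ u
      · obtain ⟨j₀, hj₀, huniq⟩ := hpart u v (Ne.symm huv)
        rw [if_pos huv, Finset.sum_eq_single j₀]
        · rw [if_pos hj₀]
        · intro j _ hjne
          rw [if_neg]
          intro hP
          exact hjne (huniq j hP)
        · intro h; exact absurd (Finset.mem_univ j₀) h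
      · push_neg at huv; subst huv
        rw [if_neg (by simp)]
        refine (Finset.sum_eq_zero ?_).symm
        intro j _
        rw [if_neg]
        rintro (⟨h1, h2⟩ | ⟨h1, h2⟩) <;>
          exact Finset.disjoint_left.mp (hdisj j) h1 h2
    have orsplit : ∀ (j : Fin k) (u v : Fin n),
        (if (u ∈ A j ∧ v ∈ B j) ∨ (v ∈ A j ∧ u ∈ B j) then f u * g v else 0)
        = (if u ∈ A j then f u else 0) * (if v ∈ B j then g v else 0)
        + (if u ∈ B j then f u else 0) * (if v ∈ A j then g v else 0) := by
      intro j u v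
      by_cases h1 : u ∈ A j <;> by_cases h2 : v ∈ B j <;>
        by_cases h3 : v ∈ A j <;> by_cases h4 : u ∈ B j <;>
        first
        | exact absurd h4 (Finset.disjoint_left.mp (hdisj j) h1)
        | exact absurd h2 (Finset.disjoint_left.mp (hdisj j) h3)
        | simp [h1, h2, h3, h4]
    calc (∑ u, ∑ v ∈ Finset.univ.filter (fun v => v ≠ u), f u * g v)
        = ∑ u, ∑ v, if v ≠ u then f u * g v else 0 := by
          refine Finset.sum_congr rfl fun u _ => ?_
          rw [Finset.sum_filter]
      _ = ∑ u, ∑ v, ∑ j,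
            if (u ∈ A j ∧ v ∈ B j) ∨ (v ∈ A j ∧ u ∈ B j) then f u * g v else 0 := by
          refine Finset.sum_congr rfl fun u _ => Finset.sum_congr rfl fun v _ => step u v
      _ = ∑ u, ∑ j, ∑ v,
            if (u ∈ A j ∧ v ∈ B j) ∨ (v ∈ A j ∧ u ∈ B j) then f u * g v else 0 := by
          exact Finset.sum_congr rfl fun u _ => Finset.sum_comm
      _ = ∑ j, ∑ u, ∑ v,
            if (u ∈ A j ∧ v ∈ B j) ∨ (v ∈ A j ∧ u ∈ B j) then f u * g v else 0 :=
          Finset.sum_comm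
      _ = ∑ j, ((∑ p ∈ A j, f p) * (∑ q ∈ B j, g q)
            + (∑ p ∈ B j, f p) * (∑ q ∈ A j, g q)) := by
          refine Finset.sum_congr rfl fun j _ => ?_
          simp only [orsplit j, Finset.sum_add_distrib, ← Finset.mul_sum,
            ← Finset.sum_mul]
          simp [Finset.sum_ite_mem]
  -- Doubling: off-diagonal sum of a symmetric product is twice the strict-upper sum.
  have hdouble : ∀ f : Fin n → ℕ,
      (∑ u, ∑ v ∈ Finset.univ.filter (fun v => v ≠ u), f u * f v)
      = 2 * ∑ u, ∑ v ∈ Finset.univ.filter (fun v => u < v), f u * f v := by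
    intro f
    have split : ∀ u v : Fin n,
        (if v ≠ u then f u * f v else 0)
        = (if u < v then f u * f v else 0) + (if v < u then f u * f v else 0) := by
      intro u v
      rcases lt_trichotomy u v with h | h | h
      · simp [h, h.ne', asymm h, h.ne]
      · simp [h]
      · simp [h, h.ne', asymm h, h.ne]
    have e1 : (∑ u, ∑ v ∈ Finset.univ.filter (fun v => v ≠ u), f u * f v)
        = (∑ u, ∑ v, if u < v then f u * f v else 0)
          + (∑ u, ∑ v, if v < u then f u * f v else 0) := by
      rw [← Finset.sum_add_distrib]
      refine Finset.sum_congr rfl fun u _ => ?_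
      rw [Finset.sum_filter, ← Finset.sum_add_distrib]
      exact Finset.sum_congr rfl fun v _ => split u v
    have e2 : (∑ u, ∑ v, if v < u then f u * f v else 0)
        = (∑ u, ∑ v, if u < v then f u * f v else 0) := by
      rw [Finset.sum_comm]
      refine Finset.sum_congr rfl fun u _ => Finset.sum_congr rfl fun v _ => ?_
      rw [mul_comm]
    have e3 : (∑ u, ∑ v, if u < v then f u * f v else 0)
        = ∑ u, ∑ v ∈ Finset.univ.filter (fun v => u < v), f u * f v := by
      refine Finset.sum_congr rfl fun u _ => ?_
      rw [Finset.sum_filter]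
    rw [e1, e2, e3, two_mul]
  -- First part.
  have first : (∑ i, ∑ j ∈ Finset.univ.filter (fun j => i < j), V i * V j) +
      (∑ i, ∑ j ∈ Finset.univ.filter (fun j => i < j), V' i * V' j) =
      ∑ i, ∑ j ∈ Finset.univ.filter (fun j => j ≠ i), V i * V' j := by
    have hVV := key V V
    have hV'V' := key V' V'
    have hVV' := key V V'
    rw [hdouble V] at hVV
    rw [hdouble V'] at hV'V'
    apply Nat.eq_of_mul_eq_mul_left (show 0 < 2 by norm_num)
    rw [Nat.mul_add, hVV, hV'V', hVV']
    rw [← Finset.sum_add_distrib, Finset.mul_sum]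
    refine Finset.sum_congr rfl fun j _ => ?_
    rw [← hAj j]
    ring
  refine ⟨first, ?_⟩
  -- Second part: integer sum-of-squares argument.
  have hoff : ∀ f g : Fin n → ℤ,
      (∑ u, ∑ v ∈ Finset.univ.filter (fun v => v ≠ u), f u * g v)
      = (∑ u, f u) * (∑ u, g u) - ∑ u, f u * g u := by
    intro f g
    have h1 : ∀ u : Fin n, (∑ v ∈ Finset.univ.filter (fun v => v ≠ u), f u * g v)
        = f u * (∑ v, g v) - f u * g u := by
      intro u
      rw [Finset.filter_ne', Finset.sum_erase_eq_sub (Finset.mem_univ u), Finset.mul_sum]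
    rw [Finset.sum_congr rfl fun u _ => h1 u, Finset.sum_sub_distrib, ← Finset.sum_mul]
  -- The ℕ identity, doubled.
  have hN : (∑ u, ∑ v ∈ Finset.univ.filter (fun v => v ≠ u), V u * V v)
      + (∑ u, ∑ v ∈ Finset.univ.filter (fun v => v ≠ u), V' u * V' v)
      = 2 * ∑ u, ∑ v ∈ Finset.univ.filter (fun v => v ≠ u), V u * V' v := by
    rw [hdouble V, hdouble V', ← Nat.mul_add, first]
  have hZ : (∑ u, ∑ v ∈ Finset.univ.filter (fun v => v ≠ u), (V u : ℤ) * (V v : ℤ))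
      + (∑ u, ∑ v ∈ Finset.univ.filter (fun v => v ≠ u), (V' u : ℤ) * (V' v : ℤ))
      = 2 * ∑ u, ∑ v ∈ Finset.univ.filter (fun v => v ≠ u), (V u : ℤ) * (V' v : ℤ) := by
    exact_mod_cast hN
  rw [hoff (fun u => (V u : ℤ)) (fun u => (V u : ℤ)),
      hoff (fun u => (V' u : ℤ)) (fun u => (V' u : ℤ)),
      hoff (fun u => (V u : ℤ)) (fun u => (V' u : ℤ))] at hZ
  have hS : (∑ u, (V u : ℤ)) = ∑ u, (V' u : ℤ) := by exact_mod_cast htot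
  have hsq : (∑ u, ((V u : ℤ) - (V' u : ℤ)) ^ 2) = 0 := by
    have expand : (∑ u, ((V u : ℤ) - (V' u : ℤ)) ^ 2)
        = (∑ u, (V u : ℤ) * (V u : ℤ)) + (∑ u, (V' u : ℤ) * (V' u : ℤ))
          - 2 * ∑ u, (V u : ℤ) * (V' u : ℤ) := by
      rw [Finset.mul_sum, ← Finset.sum_add_distrib, ← Finset.sum_sub_distrib]
      refine Finset.sum_congr rfl fun u _ => ?_
      ring
    rw [expand]
    rw [hS] at hZ
    linarith
  intro p
  have hp : ((V p : ℤ) - (V' p : ℤ)) ^ 2 = 0 := by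
    have := (Finset.sum_eq_zero_iff_of_nonneg
      (fun i _ => sq_nonneg ((V i : ℤ) - (V' i : ℤ)))).mp hsq p (Finset.mem_univ p)
    exact this
  have : (V p : ℤ) = (V' p : ℤ) := by
    have := pow_eq_zero_iff (n := 2) (by norm_num) |>.mp hp
    linarith
  exact_mod_cast this
end

section
/- If the edge set of K_n is partitioned into the edge sets of complete bipartite graphs (L_i, R_i), i = 1,...,m, then there is no nonzero function τ : [n] → ℤ with Σ_{j∈[n]} τ(j) = 0 and Σ_{j∈L_i} τ(j) = 0 for all i. -/
/-- If the edges of `K_n` are partitioned by complete bipartite graphs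
`(L i, R i)` then there is no nonzero `τ : [n] → ℤ` summing to zero on `[n]`
and on each `L i`. -/
theorem no_nonzero_tau (n m : ℕ)
    (L R : Fin m → Finset (Fin n))
    (hdisj : ∀ i, Disjoint (L i) (R i))
    (hpart : ∀ u v : Fin n, u ≠ v →
      ∃! i : Fin m, (u ∈ L i ∧ v ∈ R i) ∨ (v ∈ L i ∧ u ∈ R i))
    (τ : Fin n → ℤ) (hτ : τ ≠ 0)
    (htot : ∑ j, τ j = 0)
    (hL : ∀ i, ∑ j ∈ L i, τ j = 0) :
    False := by
  classical
  set C : Fin m → Fin n → Fin n → Prop :=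
    fun i u v => (u ∈ L i ∧ v ∈ R i) ∨ (v ∈ L i ∧ u ∈ R i) with hC
  have hdisj' : ∀ i, ∀ x : Fin n, x ∈ L i → x ∈ R i → False :=
    fun i x h1 h2 => Finset.disjoint_left.mp (hdisj i) h1 h2
  -- key pointwise identity
  have key : ∀ u v : Fin n, ∑ i : Fin m,
      (if C i u v then τ u * τ v else 0) =
      (if u = v then 0 else τ u * τ v) := by
    intro u v
    by_cases huv : u = v
    · simp only [huv, if_true]
      apply Finset.sum_eq_zero
      intro i _
      have hnc : ¬ C i v v := by
        rw [hC]
        rintro (⟨h1, h2⟩ | ⟨h1, h2⟩) <;> exact hdisj' i v h1 h2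
      simp [hnc]
    · simp only [huv, if_false]
      obtain ⟨i, hi, huniq⟩ := hpart u v huv
      rw [Finset.sum_eq_single i]
      · have : C i u v := hi
        simp [this]
      · intro j _ hj
        simp only [ite_eq_right_iff]
        intro hc
        exact absurd (huniq j hc) hj
      · simp
  -- first evaluation of the double sum
  have h1 : ∑ u : Fin n, ∑ v : Fin n, ∑ i : Fin m,
      (if C i u v then τ u * τ v else 0) = - ∑ j, τ j * τ j := by
    simp only [key]
    have hrow : ∀ u : Fin n, ∑ v : Fin n, (if u = v then 0 else τ u * τ v) =
        τ u * (∑ j, τ j) - τ u * τ u := by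
      intro u
      have : ∀ v : Fin n, (if u = v then 0 else τ u * τ v) =
          τ u * τ v - (if u = v then τ u * τ v else 0) := by
        intro v; by_cases h : u = v <;> simp [h]
      simp only [this, Finset.sum_sub_distrib, Finset.sum_ite_eq, Finset.mem_univ,
        if_true, ← Finset.mul_sum]
    simp only [hrow, Finset.sum_sub_distrib, ← Finset.sum_mul, htot, zero_mul, zero_sub]
  -- second evaluation: each bipartite block contributes zero
  have h2 : ∀ i : Fin m, ∑ u : Fin n, ∑ v : Fin n,
      (if C i u v then τ u * τ v else 0) = 0 := by
    intro i
    have split : ∀ u v : Fin n, (if C i u v then τ u * τ v else 0) =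
        (if u ∈ L i then τ u else 0) * (if v ∈ R i then τ v else 0) +
        (if v ∈ L i then τ v else 0) * (if u ∈ R i then τ u else 0) := by
      intro u v
      have hnb : ¬ ((u ∈ L i ∧ v ∈ R i) ∧ (v ∈ L i ∧ u ∈ R i)) := by
        rintro ⟨⟨h1, _⟩, ⟨_, h2⟩⟩
        exact hdisj' i u h1 h2
      simp only [hC]
      by_cases ha : u ∈ L i <;> by_cases hb : v ∈ R i <;>
        by_cases hc : v ∈ L i <;> by_cases hd : u ∈ R i <;>
        simp [ha, hb, hc, hd, mul_comm] at hnb ⊢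
    have hLsum : ∑ u : Fin n, (if u ∈ L i then τ u else 0) = 0 := by
      rw [← Finset.sum_filter, Finset.filter_mem_eq_inter, Finset.univ_inter]
      exact hL i
    simp only [split, Finset.sum_add_distrib]
    have hA : ∑ u : Fin n, ∑ v : Fin n,
        (if u ∈ L i then τ u else 0) * (if v ∈ R i then τ v else 0) = 0 := by
      simp only [← Finset.mul_sum]
      rw [← Finset.sum_mul, hLsum, zero_mul]
    have hB : ∑ u : Fin n, ∑ v : Fin n,
        (if v ∈ L i then τ v else 0) * (if u ∈ R i then τ u else 0) = 0 := by
      apply Finset.sum_eq_zero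
      intro u _
      rw [← Finset.sum_mul, hLsum, zero_mul]
    rw [hA, hB, add_zero]
  -- swap the order of summation
  have hswap : ∑ u : Fin n, ∑ v : Fin n, ∑ i : Fin m,
      (if C i u v then τ u * τ v else 0) =
      ∑ i : Fin m, ∑ u : Fin n, ∑ v : Fin n,
      (if C i u v then τ u * τ v else 0) := by
    rw [show (∑ u : Fin n, ∑ v : Fin n, ∑ i : Fin m,
        (if C i u v then τ u * τ v else 0)) =
        ∑ u : Fin n, ∑ i : Fin m, ∑ v : Fin n,
        (if C i u v then τ u * τ v else 0) from
      Finset.sum_congr rfl fun u _ => Finset.sum_comm]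
    exact Finset.sum_comm
  have hzero : ∑ j, τ j * τ j = 0 := by
    have h0 : - ∑ j, τ j * τ j = 0 := by
      rw [← h1, hswap]
      exact Finset.sum_eq_zero fun i _ => h2 i
    linarith
  have hall : ∀ j : Fin n, τ j = 0 := by
    intro j
    have hnn : ∀ k : Fin n, k ∈ Finset.univ → 0 ≤ τ k * τ k :=
      fun k _ => mul_self_nonneg (τ k)
    exact mul_self_eq_zero.mp
      ((Finset.sum_eq_zero_iff_of_nonneg hnn).mp hzero j (Finset.mem_univ j))
  exact hτ (funext hall)
end

section
/- For any system of m ≤ n - 2 subsets L₁,...,Lₘ of [n], there exists a nonzero integer vector τ ∈ ℤⁿ such that Σ_{j∈L_i} τ(j) = 0 for all i and Σ_{j=1}^n τ(j) = 0, obtained as the difference of two distinct positive labelings with the same pattern. -/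
/-- For any `m ≤ n - 2` subsets `L i ⊆ [n]` there is a nonzero integer vector
`τ` summing to zero on each `L i` and on all of `[n]`, obtained as the
difference of two distinct positive labelings with the same pattern. -/
theorem exists_tau_of_few_subsets (n m : ℕ) (hm : m + 2 ≤ n)
    (L : Fin m → Finset (Fin n)) :
    ∃ τ : Fin n → ℤ, τ ≠ 0 ∧ (∀ i, ∑ j ∈ L i, τ j = 0) ∧ (∑ j, τ j = 0) ∧
      ∃ σ₁ σ₂ : Fin n → ℤ, (∀ j, 0 < σ₁ j) ∧ (∀ j, 0 < σ₂ j) ∧ σ₁ ≠ σ₂ ∧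
        τ = σ₁ - σ₂ := by
  -- a linear map collecting all the sums
  set f : (Fin n → ℚ) →ₗ[ℚ] (Fin (m + 1) → ℚ) :=
    LinearMap.pi (fun i =>
      if h : (i : ℕ) < m then ∑ j ∈ L ⟨i, h⟩, LinearMap.proj j
      else ∑ j, LinearMap.proj j) with hf
  have hker : LinearMap.ker f ≠ ⊥ := by
    apply LinearMap.ker_ne_bot_of_finrank_lt
    simp only [Module.finrank_pi, Fintype.card_fin]
    omega
  obtain ⟨x, hx0, hxne'⟩ := Submodule.exists_mem_ne_zero_of_ne_bot hker
  have hx : ∀ i, f x i = 0 := fun i => by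
    rw [LinearMap.mem_ker] at hx0; rw [hx0]; rfl
  have hLsum : ∀ i : Fin m, ∑ j ∈ L i, x j = 0 := by
    intro i
    have := hx ⟨i, by omega⟩
    simp only [hf, LinearMap.pi_apply, dif_pos i.isLt, LinearMap.coe_sum,
      Finset.sum_apply, LinearMap.proj_apply] at this
    simpa using this
  have htot : ∑ j, x j = 0 := by
    have := hx ⟨m, by omega⟩
    simp only [hf, LinearMap.pi_apply, dif_neg (lt_irrefl m), LinearMap.coe_sum,
      Finset.sum_apply, LinearMap.proj_apply] at this
    exact this
  -- clear denominators
  set q : ℤ := ∏ j, ((x j).den : ℤ) with hq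
  have hqpos : 0 < q := Finset.prod_pos (fun j _ => by exact_mod_cast (x j).den_pos)
  set τ : Fin n → ℤ := fun j => (q / ((x j).den : ℤ)) * (x j).num with hτ
  have hcast : ∀ j, ((τ j : ℚ)) = (q : ℚ) * x j := by
    intro j
    have hd : ((x j).den : ℤ) ∣ q := Finset.dvd_prod_of_mem _ (Finset.mem_univ j)
    have hmul : ((q / ((x j).den : ℤ) : ℤ) : ℚ) * ((x j).den : ℚ) = (q : ℚ) := by
      exact_mod_cast congrArg (Int.cast : ℤ → ℚ) (Int.ediv_mul_cancel hd)
    have hxj : (x j) = ((x j).num : ℚ) / ((x j).den : ℚ) := (Rat.num_div_den (x j)).symm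
    have hden0 : ((x j).den : ℚ) ≠ 0 := by exact_mod_cast (x j).den_pos.ne'
    have hxd : (x j) * ((x j).den : ℚ) = ((x j).num : ℚ) := Rat.mul_den_eq_num _
    have key : ((τ j : ℚ)) * ((x j).den : ℚ) = ((q : ℚ) * x j) * ((x j).den : ℚ) := by
      rw [hτ]
      push_cast
      rw [mul_right_comm, hmul, mul_assoc, hxd]
    exact mul_right_cancel₀ hden0 key
  have hτcastsum : ∀ s : Finset (Fin n), ((∑ j ∈ s, τ j : ℤ) : ℚ) = (q : ℚ) * ∑ j ∈ s, x j := by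
    intro s
    push_cast
    rw [Finset.mul_sum]
    exact Finset.sum_congr rfl fun j _ => hcast j
  have hτL : ∀ i, ∑ j ∈ L i, τ j = 0 := by
    intro i
    have := hτcastsum (L i)
    rw [hLsum i, mul_zero] at this
    exact_mod_cast this
  have hτtot : ∑ j, τ j = 0 := by
    have := hτcastsum Finset.univ
    rw [htot, mul_zero] at this
    exact_mod_cast this
  have hτne : τ ≠ 0 := by
    intro h
    apply hxne'
    funext j
    have := hcast j
    rw [h] at this
    simp only [Pi.zero_apply, Int.cast_zero] at this
    have hq0 : (q : ℚ) ≠ 0 := by exact_mod_cast hqpos.ne'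
    have := (mul_eq_zero.mp this.symm).resolve_left hq0
    simpa using this
  refine ⟨τ, hτne, hτL, hτtot, ?_⟩
  -- positive labelings
  obtain ⟨C, hCpos, hC⟩ : ∃ C : ℤ, 0 < C ∧ ∀ j, |τ j| < C :=
    ⟨(∑ j, |τ j|) + 1, by positivity, fun j => by
      have : |τ j| ≤ ∑ j, |τ j| := Finset.single_le_sum (fun k _ => abs_nonneg (τ k))
        (Finset.mem_univ j)
      omega⟩
  refine ⟨fun j => τ j + C, fun _ => C, ?_, ?_, ?_, ?_⟩
  · intro j; show 0 < τ j + C; have := abs_lt.mp (hC j); omega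
  · intro j; exact hCpos
  · intro h
    apply hτne
    funext j
    have := congrFun h j
    simpa using this
  · funext j; simp
end
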